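/- arXiv:2304.06633 — 3 statements merged into one kernel-verified Lean document; each statement's English description precedes it below -/
import Mathlib

section
/- Kan fibrations of simplicial sets are stable under filtered colimits: if I is a filtered category and α : X → Y is a natural transformation between functors X, Y : I → sSet such that each component α_i : X(i) → Y(i) is a Kan fibration, then the induced map colim X → colim Y on colimits is a Kan fibration. -/
open CategoryTheory

namespace Statement5

universe u

/-- A map of simplicial sets is a Kan fibration if it has the right lifting
property with respect to all horn inclusions `Λⁿ_k → Δⁿ` for `0 ≤ k ≤ n`,
`n ≥ 1`. -/
def IsKanFibration {X Y : SSet.{u}} (p : X ⟶ Y) : Prop :=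
  ∀ (n : ℕ) (i : Fin (n + 2)), HasLiftingProperty (SSet.horn (n + 1) i).ι p

open Limits in
/-- A lifting problem against `colimMap α` descends, by finite presentability of `A` and `B`,
to a lifting problem against some `α.app k`. -/
theorem hasLiftingProperty_colimMap_of_isFinitelyPresentable.{v, w} {C : Type*} [Category.{v} C]
    {J : Type w} [SmallCategory J] [IsFiltered J] {A B : C} (i : A ⟶ B)
    [IsFinitelyPresentable.{w} A] [IsFinitelyPresentable.{w} B]
    {X Y : J ⥤ C} [HasColimit X] [HasColimit Y] (α : X ⟶ Y)
    (h : ∀ j, HasLiftingProperty i (α.app j)) :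
    HasLiftingProperty i (colimMap α) where
  sq_hasLift {f g} sq := by
    obtain ⟨j₁, f', rfl⟩ := IsFinitelyPresentable.exists_hom_of_isColimit (colimit.isColimit X) f
    obtain ⟨j₂, g', rfl⟩ := IsFinitelyPresentable.exists_hom_of_isColimit (colimit.isColimit Y) g
    obtain ⟨k, u, v, huv⟩ := IsFinitelyPresentable.exists_eq_of_isColimit (colimit.isColimit Y)
      (f' ≫ α.app j₁) (i ≫ g') (by simpa using sq.w)
    have sq' : CommSq (f' ≫ X.map u) i (α.app k) (g' ≫ Y.map v) := ⟨by simpa using huv⟩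
    exact ⟨⟨{ l := sq'.lift ≫ colimit.ι X k
              fac_left := by simp [reassoc_of% sq'.fac_left]
              fac_right := by simp [reassoc_of% sq'.fac_right] }⟩⟩

/-- Kan fibrations of simplicial sets are stable under filtered colimits: if
`I` is filtered and `α : X ⟶ Y` is a natural transformation of `I`-diagrams of
simplicial sets whose components are Kan fibrations, then the induced map on
colimits is a Kan fibration. -/
theorem statement5 {I : Type u} [SmallCategory I] [IsFiltered I]
    (X Y : I ⥤ SSet.{u}) (α : X ⟶ Y)
    (h : ∀ i : I, IsKanFibration (α.app i)) :
    IsKanFibration (Limits.colimMap α) := fun n i =>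
  -- horns and standard simplices are finite simplicial sets, hence finitely presentable
  hasLiftingProperty_colimMap_of_isFinitelyPresentable _ α fun j => h j n i

end Statement5
end

section
/- The underlying simplicial set of any simplicial group is a Kan complex: every horn Λⁿ_k → G (0 ≤ k ≤ n) in a simplicial group G admits a filler Δⁿ → G. -/
/-!
Moore's algorithm. Given a compatible family of faces `x j` (`j ≠ i`) in `G_{n+1}`, a filler in
`G_{n+2}` is built one face at a time, in the order `0, 1, …, i - 1, n + 2, n + 1, …, i + 1`.
To fix face `r` of a partial filler `w`, multiply `w` on the right by the degenerate simplex
`σ_t ((δ_r w)⁻¹ x_r)`, where `t` is chosen so that `r ∈ {t, t + 1}` and all faces fixed so far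
lie outside `{t, t + 1}`. Then `δ_r σ_t = id` corrects face `r`, while every face `j` fixed
earlier satisfies `δ_j σ_t = σ δ_{j'}`, and `δ_{j'}((δ_r w)⁻¹ x_r) = 1` by compatibility, so
face `j` is unchanged. A horn of dimension `1` is filled by a degenerate simplex, and the
empty horn of dimension `0` by the identity.
-/

open CategoryTheory

namespace Statement6

universe u

/-- The definition of a Kan complex as it stood in the older Mathlib: every horn
`SSet.horn n i ⟶ S` (for all `n`, including `n = 0`) extends to `Δ[n] ⟶ S`. -/
class KanComplex (S : SSet.{u}) : Prop where
  hornFilling : ∀ ⦃n : ℕ⦄ ⦃i : Fin (n + 1)⦄ (σ₀ : ((SSet.horn.{u} n i : SSet.{u}) ⟶ S)),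
    ∃ σ : SSet.stdSimplex.{u}.obj (SimplexCategory.mk n) ⟶ S, σ₀ = (SSet.horn.{u} n i).ι ≫ σ

open Simplicial

section MooreFilling

variable {G : SimplicialObject GrpCat.{u}} {n : ℕ}

lemma δ_σ_apply_eq_self {r : Fin (n + 2)} {t : Fin (n + 1)} (hr : r = t.castSucc ∨ r = t.succ)
    (y : G _⦋n⦌) : G.δ r (G.σ t y) = y := by
  rcases hr with hr | hr
  · exact ConcreteCategory.congr_hom (G.δ_comp_σ_self' hr) y
  · exact ConcreteCategory.congr_hom (G.δ_comp_σ_succ' hr) y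

lemma δ_σ_apply_eq_one_of_lt {j : Fin (n + 3)} {t : Fin (n + 2)} (h : j < t.castSucc)
    {y : G _⦋n + 1⦌} (hy : G.δ (j.castPred (Fin.ne_last_of_lt h)) y = 1) :
    G.δ j (G.σ t y) = 1 := by
  obtain ⟨a, rfl⟩ := Fin.eq_castSucc_of_ne_last (Fin.ne_last_of_lt h)
  rw [Fin.castSucc_lt_castSucc_iff] at h
  obtain ⟨b, rfl⟩ := Fin.eq_succ_of_ne_zero (Fin.ne_zero_of_lt h)
  have hσ : G.δ a.castSucc (G.σ b.succ y) = G.σ b (G.δ a y) :=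
    ConcreteCategory.congr_hom (G.δ_comp_σ_of_le (Fin.le_castSucc_iff.mpr h)) y
  rw [hσ, show G.δ a y = 1 from hy, map_one]

lemma δ_σ_apply_eq_one_of_gt {j : Fin (n + 3)} {t : Fin (n + 2)} (h : t.succ < j)
    {y : G _⦋n + 1⦌} (hy : G.δ (j.pred (Fin.ne_zero_of_lt h)) y = 1) :
    G.δ j (G.σ t y) = 1 := by
  have hσ : G.δ j (G.σ t y) = G.σ _ (G.δ (j.pred (Fin.ne_zero_of_lt h)) y) :=
    ConcreteCategory.congr_hom (G.δ_comp_σ_of_gt' h) y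
  rw [hσ, hy, map_one]

lemma δ_δ_apply_of_lt {j k : Fin (n + 3)} (h : j < k) (w : G _⦋n + 2⦌) :
    G.δ (j.castPred (Fin.ne_last_of_lt h)) (G.δ k w) =
      G.δ (k.pred (Fin.ne_zero_of_lt h)) (G.δ j w) := by
  obtain ⟨a, rfl⟩ := Fin.eq_castSucc_of_ne_last (Fin.ne_last_of_lt h)
  exact ConcreteCategory.congr_hom (G.δ_comp_δ' h) w

variable {i : Fin (n + 3)} {x : ∀ j : Fin (n + 3), j ≠ i → G _⦋n + 1⦌}

/-- The elementwise form of `SSet.horn.IsCompatible`. -/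
def IsHornCompatible (x : ∀ j : Fin (n + 3), j ≠ i → G _⦋n + 1⦌) : Prop :=
  ∀ (j k : Fin (n + 3)) (hj : j ≠ i) (hk : k ≠ i) (hjk : j < k),
    G.δ (k.pred (Fin.ne_zero_of_lt hjk)) (x j hj) =
      G.δ (j.castPred (Fin.ne_last_of_lt hjk)) (x k hk)

lemma exists_δ_eq_insert_face (hx : IsHornCompatible x) (t : Fin (n + 2)) {r : Fin (n + 3)}
    (hr : r = t.castSucc ∨ r = t.succ) (hri : r ≠ i) (S : Fin (n + 3) → Prop)
    (hS : ∀ j, S j → j < t.castSucc ∨ t.succ < j) {w : G _⦋n + 2⦌}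
    (hw : ∀ j hj, S j → G.δ j w = x j hj) :
    ∃ w' : G _⦋n + 2⦌, ∀ j hj, S j ∨ j = r → G.δ j w' = x j hj := by
  set y := (G.δ r w)⁻¹ * x r hri
  refine ⟨w * G.σ t y, fun j hj hjS => ?_⟩
  rw [map_mul]
  rcases hjS with hjS | rfl
  · rcases hS j hjS with hjt | htj
    · have hjr : j < r := by rcases hr with rfl | rfl <;> grind
      have hy : G.δ (j.castPred (Fin.ne_last_of_lt hjt)) y = 1 := by
        rw [map_mul, map_inv, δ_δ_apply_of_lt hjr, hw j hj hjS, hx j r hj hri hjr, inv_mul_cancel]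
      rw [hw j hj hjS, δ_σ_apply_eq_one_of_lt hjt hy, mul_one]
    · have hrj : r < j := by rcases hr with rfl | rfl <;> grind
      have hy : G.δ (j.pred (Fin.ne_zero_of_lt htj)) y = 1 := by
        rw [map_mul, map_inv, ← δ_δ_apply_of_lt hrj, hw j hj hjS, hx r j hri hj hrj, inv_mul_cancel]
      rw [hw j hj hjS, δ_σ_apply_eq_one_of_gt htj hy, mul_one]
  · rw [δ_σ_apply_eq_self hr, mul_inv_cancel_left]

lemma exists_δ_eq_of_lt (hx : IsHornCompatible x) (k : Fin (n + 3)) :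
    ∃ w : G _⦋n + 2⦌, ∀ j hj, j < k → j < i → G.δ j w = x j hj := by
  induction k using Fin.induction with
  | zero => exact ⟨1, fun j _ h => absurd h (Fin.not_lt_zero j)⟩
  | succ k ih =>
    obtain ⟨w, hw⟩ := ih
    by_cases hki : k.castSucc < i
    · obtain ⟨w', hw'⟩ := exists_δ_eq_insert_face hx k (Or.inl rfl) hki.ne
        (fun j => j < k.castSucc ∧ j < i) (fun j hj => Or.inl hj.1)
        (fun j hj hS => hw j hj hS.1 hS.2)
      exact ⟨w', fun j hj hjk hji => hw' j hj (by grind)⟩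
    · exact ⟨w, fun j hj hjk hji => hw j hj (by grind) hji⟩

lemma exists_δ_eq_of_lt_or_gt (hx : IsHornCompatible x) (k : Fin (n + 3)) :
    ∃ w : G _⦋n + 2⦌, ∀ j hj, j < i ∨ k < j → G.δ j w = x j hj := by
  induction k using Fin.reverseInduction with
  | last =>
    obtain ⟨w, hw⟩ := exists_δ_eq_of_lt hx (Fin.last _)
    exact ⟨w, fun j hj h => hw j hj (by grind) (by grind)⟩
  | cast k ih =>
    obtain ⟨w, hw⟩ := ih
    by_cases hik : i < k.succ
    · obtain ⟨w', hw'⟩ := exists_δ_eq_insert_face hx k (Or.inr rfl) hik.ne'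
        (fun j => j < i ∨ k.succ < j) (fun j hj => by grind) hw
      exact ⟨w', fun j hj h => hw' j hj (by grind)⟩
    · exact ⟨w, fun j hj h => hw j hj (by grind)⟩

theorem exists_δ_eq_of_isHornCompatible (hx : IsHornCompatible x) :
    ∃ g : G _⦋n + 2⦌, ∀ j hj, G.δ j g = x j hj := by
  obtain ⟨g, hg⟩ := exists_δ_eq_of_lt_or_gt hx 0
  exact ⟨g, fun j hj => hg j hj (by grind)⟩

end MooreFilling

section Horns

open SSet

lemma exists_δ_comp_eq_of_horn_one (X : SSet.{u}) {i : Fin 2}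
    (f : ∀ (j : Fin 2) (_ : j ≠ i), Δ[0] ⟶ X) :
    ∃ φ : Δ[1] ⟶ X, ∀ j hj, stdSimplex.δ j ≫ φ = f j hj := by
  refine ⟨stdSimplex.σ 0 ≫ f i.rev (by grind), fun j hj => ?_⟩
  obtain rfl : j = i.rev := by grind
  rw [← Category.assoc,
    stdSimplex.isTerminalObj₀.hom_ext (stdSimplex.δ i.rev ≫ stdSimplex.σ 0) (𝟙 _),
    Category.id_comp]

lemma horn_zero_hom_ext {X : SSet.{u}} {i : Fin 1} (f g : (Λ[0, i] : SSet.{u}) ⟶ X) : f = g := by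
  ext m α
  exact absurd α.2 fun h => h (Set.eq_univ_of_forall fun z => Or.inr (Subsingleton.elim (α := Fin 1) z i))

end Horns

theorem kanComplex_comp_forget (G : SimplicialObject GrpCat.{u}) :
    SSet.KanComplex (G ⋙ forget GrpCat) := by
  rw [SSet.KanComplex.iff]
  intro n i f hf
  cases n with
  | zero => exact exists_δ_comp_eq_of_horn_one _ f
  | succ n =>
    obtain ⟨g, hg⟩ := exists_δ_eq_of_isHornCompatible (G := G)
      (x := fun j hj => SSet.yonedaEquiv (f j hj)) (fun j k hj hk hjk => by
        have hfjk := congrArg SSet.yonedaEquiv (hf j k hj hk hjk)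
        rwa [SSet.stdSimplex.yonedaEquiv_δ_comp, SSet.stdSimplex.yonedaEquiv_δ_comp] at hfjk)
    exact ⟨SSet.yonedaEquiv.symm g, fun j hj => by
      rw [SSet.stdSimplex.δ_comp_yonedaEquiv_symm, Equiv.symm_apply_eq]
      exact hg j hj⟩

/-- The underlying simplicial set of any simplicial group is a Kan complex:
every horn `Λⁿ_k → G` (`0 ≤ k ≤ n`) in a simplicial group `G` admits a filler
`Δⁿ → G`. -/
theorem statement6 (G : SimplexCategoryᵒᵖ ⥤ GrpCat.{u}) :
    KanComplex (G ⋙ forget GrpCat) := by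
  have := kanComplex_comp_forget G
  refine ⟨fun n i σ₀ => ?_⟩
  cases n with
  | zero => exact ⟨SSet.yonedaEquiv.symm (1 : G _⦋0⦌), horn_zero_hom_ext _ _⟩
  | succ n => exact SSet.KanComplex.hornFilling σ₀

end Statement6
end

section
/- A homomorphism p : G → H of simplicial groups that is surjective in every simplicial degree is a Kan fibration of underlying simplicial sets. -/
/-!
Given a horn `y` in `G` over an `(n+1)`-simplex `t` of `H`, start from any `u` with `p u = t`
and correct its faces one at a time (Moore's algorithm). If `d_r ∘ s_c = id`, replacing `u` by
`u · s_c((d_r u)⁻¹ · y_r)` makes the `r`-th face equal to `y_r`, keeps `p u = t` because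
`p y_r = d_r t`, and leaves every face `d_a u` with `a ∉ {c, c+1}` unchanged. Taking
`r = 0, …, k-1` with `c = r`, and then `r = n+1, …, k+1` with `c = r-1`, the faces already
fixed are never disturbed.
-/

open CategoryTheory

namespace Statement7

universe u

/-- A map of simplicial sets is a Kan fibration if it has the right lifting
property against all horn inclusions `Λⁿ_k → Δⁿ`. -/
def IsKanFibration {X Y : SSet.{u}} (p : X ⟶ Y) : Prop :=
  ∀ (n : ℕ) (i : Fin (n + 1)), HasLiftingProperty (SSet.horn n i).ι p

open Simplicial Opposite SimplexCategory

lemma δ_comp_σ_comp_δ_apply_ne {n : ℕ} {c : Fin (n + 1)} {a r : Fin (n + 2)}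
    (hr : r = c.castSucc ∨ r = c.succ) (ha : a ≠ c.castSucc) (ha' : a ≠ c.succ)
    (x : Fin (n + 1)) : (δ a ≫ σ c ≫ δ r).toOrderHom x ≠ a := by
  simp only [δ, σ, comp_toOrderHom, OrderHom.comp_coe, Function.comp_apply, mkHom,
    Hom.toOrderHom_mk, OrderEmbedding.toOrderHom_coe, Fin.succAboveOrderEmb_apply,
    Fin.predAboveOrderHom_coe, Fin.succAbove, Fin.predAbove]
  split_ifs <;> grind [Fin.coe_castPred]

lemma δ_comp_σ_eq_id {n : ℕ} {c : Fin (n + 1)} {r : Fin (n + 2)}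
    (hr : r = c.castSucc ∨ r = c.succ) : δ r ≫ σ c = 𝟙 _ := by
  rcases hr with rfl | rfl
  exacts [δ_comp_σ_self, δ_comp_σ_succ]

lemma map_op_comp_apply (G : SimplexCategoryᵒᵖ ⥤ GrpCat.{u}) {a b c : SimplexCategory}
    (φ : a ⟶ b) (ψ : b ⟶ c) (g : G.obj (op c)) :
    G.map (φ ≫ ψ).op g = G.map φ.op (G.map ψ.op g) := by
  rw [op_comp, G.map_comp]
  rfl

variable {G H : SimplexCategoryᵒᵖ ⥤ GrpCat.{u}}

section Filler

variable (p : G ⟶ H) {n : ℕ} (t : H _⦋n + 1⦌) (y : Fin (n + 2) → G _⦋n⦌)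

def IsLiftWithFacesOn (S : Set (Fin (n + 2))) (u : G _⦋n + 1⦌) : Prop :=
  p.app _ u = t ∧ ∀ a ∈ S, G.map (δ a).op u = y a

variable {p t y}

lemma IsLiftWithFacesOn.insert {S : Set (Fin (n + 2))} {u : G _⦋n + 1⦌}
    (hu : IsLiftWithFacesOn p t y S u) {r : Fin (n + 2)} {c : Fin (n + 1)}
    (hr : r = c.castSucc ∨ r = c.succ) (hS : ∀ a ∈ S, a ≠ c.castSucc ∧ a ≠ c.succ)
    (hy : p.app _ (y r) = H.map (δ r).op t)
    (hcompat : ∀ a ∈ S, ∀ α β : ⦋n⦌ ⟶ ⦋n⦌,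
      α ≫ δ a = β ≫ δ r → G.map α.op (y a) = G.map β.op (y r)) :
    IsLiftWithFacesOn p t y (insert r S) (u * G.map (σ c).op ((G.map (δ r).op u)⁻¹ * y r)) := by
  obtain ⟨hut, huS⟩ := hu
  refine ⟨?_, ?_⟩
  · simp [NatTrans.naturality_apply, hut, hy]
  rintro a (rfl | ha)
  · rw [map_mul, ← map_op_comp_apply, δ_comp_σ_eq_id hr, op_id, G.map_id]
    exact mul_inv_cancel_left _ _
  -- `δ a ≫ σ c ≫ δ r` misses `a`, so it factors through `δ a`, and compatibility shows that the
  -- correction term has trivial `a`-th face.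
  · obtain ⟨γ, hγ⟩ := eq_comp_δ_of_not_surjective' (δ a ≫ σ c ≫ δ r) a
      (δ_comp_σ_comp_δ_apply_ne hr (hS a ha).1 (hS a ha).2)
    have key : G.map (δ a ≫ σ c).op (G.map (δ r).op u) = G.map (δ a ≫ σ c).op (y r) := by
      rw [← map_op_comp_apply, Category.assoc, hγ, map_op_comp_apply, huS a ha]
      exact hcompat a ha γ _ (by rw [← hγ, Category.assoc])
    rw [map_mul, huS a ha, ← map_op_comp_apply, map_mul, map_inv, key, inv_mul_cancel, mul_one]

lemma IsLiftWithFacesOn.mono {S S' : Set (Fin (n + 2))} {u : G _⦋n + 1⦌}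
    (hu : IsLiftWithFacesOn p t y S u) (h : S' ⊆ S) : IsLiftWithFacesOn p t y S' u :=
  ⟨hu.1, fun a ha => hu.2 a (h ha)⟩

variable (p t) in
-- Compatibility is asked for every pair of maps equalised by the cofaces, which is what a map
-- out of a horn provides directly, rather than only for the identities `d_i y_j = d_{j-1} y_i`.
def IsHornOver (k : Fin (n + 2)) (y : Fin (n + 2) → G _⦋n⦌) : Prop :=
  (∀ j ≠ k, p.app _ (y j) = H.map (δ j).op t) ∧
    ∀ i ≠ k, ∀ j ≠ k, ∀ α β : ⦋n⦌ ⟶ ⦋n⦌, α ≫ δ i = β ≫ δ j → G.map α.op (y i) = G.map β.op (y j)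

variable {k : Fin (n + 2)}

lemma IsHornOver.exists_isLiftWithFacesOn_lt (hy : IsHornOver p t k y)
    (hsurj : Function.Surjective (p.app (op ⦋n + 1⦌))) :
    ∀ l ≤ (k : ℕ), ∃ u, IsLiftWithFacesOn p t y {a | (a : ℕ) < l} u := by
  intro l
  induction l with
  | zero =>
    obtain ⟨u, hu⟩ := hsurj t
    exact fun _ => ⟨u, hu, by simp⟩
  | succ l ih =>
    intro hl
    obtain ⟨u, hu⟩ := ih (by omega)
    have hlk : (⟨l, by omega⟩ : Fin (n + 2)) ≠ k := Fin.ne_of_val_ne (by dsimp; omega)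
    refine ⟨_, (hu.insert (r := ⟨l, by omega⟩) (c := ⟨l, by omega⟩) (Or.inl rfl) ?_
      (hy.1 _ hlk) fun a ha => hy.2 a ?_ _ hlk).mono ?_⟩
    · intro a (ha : (a : ℕ) < l)
      simp only [ne_eq, Fin.ext_iff, Fin.val_castSucc, Fin.val_succ]
      omega
    · exact Fin.ne_of_val_ne (by change (a : ℕ) < l at ha; omega)
    · intro a (ha : (a : ℕ) < l + 1)
      change a = _ ∨ (a : ℕ) < l
      rw [Fin.ext_iff]
      dsimp
      omega

lemma IsHornOver.exists_isLiftWithFacesOn_lt_or_gt (hy : IsHornOver p t k y)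
    (hsurj : Function.Surjective (p.app (op ⦋n + 1⦌))) :
    ∀ m, m + k ≤ n + 1 → ∃ u, IsLiftWithFacesOn p t y {a | (a : ℕ) < k ∨ n + 1 < a + m} u := by
  intro m
  induction m with
  | zero =>
    obtain ⟨u, hu⟩ := hy.exists_isLiftWithFacesOn_lt hsurj k le_rfl
    refine fun _ => ⟨u, hu.mono fun a ha => ?_⟩
    change (a : ℕ) < k ∨ n + 1 < a + 0 at ha
    change (a : ℕ) < k
    omega
  | succ m ih =>
    intro hm
    obtain ⟨u, hu⟩ := ih (by omega)
    have hrk : (⟨n + 1 - m, by omega⟩ : Fin (n + 2)) ≠ k := Fin.ne_of_val_ne (by dsimp; omega)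
    refine ⟨_, (hu.insert (r := ⟨n + 1 - m, by omega⟩) (c := ⟨n - m, by omega⟩)
      (Or.inr (Fin.ext (by simp; omega))) ?_ (hy.1 _ hrk) fun a ha => hy.2 a ?_ _ hrk).mono ?_⟩
    · intro a (ha : (a : ℕ) < k ∨ n + 1 < a + m)
      simp only [ne_eq, Fin.ext_iff, Fin.val_castSucc, Fin.val_succ]
      omega
    · exact Fin.ne_of_val_ne (by change (a : ℕ) < k ∨ n + 1 < a + m at ha; omega)
    · intro a (ha : (a : ℕ) < k ∨ n + 1 < a + (m + 1))
      change a = _ ∨ (a : ℕ) < k ∨ n + 1 < a + m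
      rw [Fin.ext_iff]
      dsimp
      omega

lemma IsHornOver.exists_lift (hy : IsHornOver p t k y)
    (hsurj : Function.Surjective (p.app (op ⦋n + 1⦌))) :
    ∃ u, p.app _ u = t ∧ ∀ a ≠ k, G.map (δ a).op u = y a := by
  obtain ⟨u, hut, hu⟩ := hy.exists_isLiftWithFacesOn_lt_or_gt hsurj (n + 1 - k) (by omega)
  refine ⟨u, hut, fun a ha => hu a ?_⟩
  have := Fin.val_ne_of_ne ha
  change (a : ℕ) < k ∨ n + 1 < a + (n + 1 - k)
  omega

end Filler

section Horn

open SSet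

variable {X Y : SSet.{u}}

lemma map_app_horn_face_eq {n : ℕ} {k : Fin (n + 2)} (f : (Λ[n + 1, k] : SSet.{u}) ⟶ X)
    {i j : Fin (n + 2)} (hi : i ≠ k) (hj : j ≠ k) {m : SimplexCategory} (α β : m ⟶ ⦋n⦌)
    (h : α ≫ δ i = β ≫ δ j) :
    X.map α.op (f.app _ (horn.face k i hi)) = X.map β.op (f.app _ (horn.face k j hj)) := by
  rw [← horn.yonedaEquiv_ι, ← horn.yonedaEquiv_ι, ← yonedaEquiv_comp, ← yonedaEquiv_comp,
    yonedaEquiv_naturality, yonedaEquiv_naturality, ← Category.assoc, ← Category.assoc]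
  congr 2
  rw [← cancel_mono (horn (n + 1) k).ι, Category.assoc, Category.assoc, horn.ι_ι, horn.ι_ι]
  exact (SSet.stdSimplex.map_comp _ _).symm.trans
    ((congrArg SSet.stdSimplex.map h).trans (SSet.stdSimplex.map_comp _ _))

lemma app_horn_face_eq_of_commSq {n : ℕ} {k : Fin (n + 2)} {f : (Λ[n + 1, k] : SSet.{u}) ⟶ X}
    {q : X ⟶ Y} {g : Δ[n + 1] ⟶ Y} (sq : CommSq f (horn (n + 1) k).ι q g) (j : Fin (n + 2))
    (hj : j ≠ k) : q.app _ (f.app _ (horn.face k j hj)) = Y.map (δ j).op (yonedaEquiv g) := by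
  rw [yonedaEquiv_naturality, ← horn.yonedaEquiv_ι, ← yonedaEquiv_comp, ← yonedaEquiv_comp,
    Category.assoc, sq.w, horn.ι_ι_assoc]
  rfl

lemma hasLift_of_yonedaEquiv {n : ℕ} {A : (Δ[n] : SSet.{u}).Subcomplex} {f : (A : SSet) ⟶ X}
    {q : X ⟶ Y} {g : Δ[n] ⟶ Y} (sq : CommSq f A.ι q g) (x : X _⦋n⦌)
    (hx : q.app _ x = yonedaEquiv g) (hf : A.ι ≫ yonedaEquiv.symm x = f) : sq.HasLift :=
  ⟨⟨{ l := yonedaEquiv.symm x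
      fac_left := hf
      fac_right := yonedaEquiv.injective (by rw [yonedaEquiv_comp, Equiv.apply_symm_apply, hx]) }⟩⟩

variable (p : G ⟶ H)

def hornFaces {n : ℕ} {k : Fin (n + 2)} (f : (Λ[n + 1, k] : SSet.{u}) ⟶ G ⋙ forget GrpCat)
    (j : Fin (n + 2)) : G _⦋n⦌ :=
  if h : j = k then 1 else f.app _ (horn.face k j h)

lemma isHornOver_hornFaces {n : ℕ} {k : Fin (n + 2)}
    {f : (Λ[n + 1, k] : SSet.{u}) ⟶ G ⋙ forget GrpCat} {g : Δ[n + 1] ⟶ H ⋙ forget GrpCat}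
    (sq : CommSq f (horn (n + 1) k).ι (Functor.whiskerRight p (forget GrpCat)) g) :
    IsHornOver p (yonedaEquiv g) k (hornFaces f) := by
  refine ⟨fun j hj => ?_, fun i hi j hj α β h => ?_⟩
  · rw [hornFaces, dif_neg hj]
    exact app_horn_face_eq_of_commSq sq j hj
  · rw [hornFaces, hornFaces, dif_neg hi, dif_neg hj]
    exact map_app_horn_face_eq f hi hj α β h

lemma hasLiftingProperty_horn_zero (hp : Function.Surjective (p.app (op ⦋0⦌))) (k : Fin 1) :
    HasLiftingProperty (horn 0 k).ι (Functor.whiskerRight p (forget GrpCat)) := by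
  refine ⟨fun {f g} sq => ?_⟩
  obtain ⟨u, hu⟩ := hp (yonedaEquiv g)
  refine hasLift_of_yonedaEquiv sq u hu ?_
  ext m x
  exact absurd x.2 fun hx =>
    hx (Set.eq_univ_of_forall fun i => Or.inr (Subsingleton.elim (α := Fin 1) i k))

lemma hasLiftingProperty_horn_succ {n : ℕ} (hp : Function.Surjective (p.app (op ⦋n + 1⦌)))
    (k : Fin (n + 2)) :
    HasLiftingProperty (horn (n + 1) k).ι (Functor.whiskerRight p (forget GrpCat)) := by
  refine ⟨fun {f g} sq => ?_⟩
  obtain ⟨u, hu, hfaces⟩ := (isHornOver_hornFaces p sq).exists_lift hp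
  refine hasLift_of_yonedaEquiv sq u hu (horn.hom_ext _ _ fun j hj => ?_)
  exact (hfaces j hj).trans (dif_neg hj)

end Horn

/-- A homomorphism of simplicial groups that is surjective in every simplicial
degree is a Kan fibration of underlying simplicial sets. -/
theorem statement7 (G H : SimplexCategoryᵒᵖ ⥤ GrpCat.{u}) (p : G ⟶ H)
    (hp : ∀ m : SimplexCategoryᵒᵖ, Function.Surjective (p.app m)) :
    IsKanFibration (Functor.whiskerRight p (forget GrpCat)) := by
  intro n k
  cases n with
  | zero => exact hasLiftingProperty_horn_zero p (hp _) k
  | succ n => exact hasLiftingProperty_horn_succ p (hp _) k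

end Statement7
end
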